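/- Suppose n ≤ 2, X ⊆ ℤ^n, and the program minimize c·x subject to Ax ≥ b, x ∈ X is feasible. Then v^L = v̄*, where v^L = sup_{λ≥0} inf_{x∈X}(c·x + λ·(b−Ax)) and v̄* = inf { c·x : Ax ≥ b, x ∈ closure(conv X) }. -/

import Mathlib

/-!
Weak duality holds because a lower bound on the Lagrangian over `X` is a closed half-space
condition, hence persists on `closure (convexHull ℝ X)`.

For the converse let `C = closure (convexHull ℝ X)` and let `r` be below the primal value.
Strong duality follows by separating `(0, r)` from the closure of the convex set of pairs
`(u, t)` for which some `x ∈ C` has `A x ≥ b - u` and `c ⬝ x ≤ t`; the separating functional,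
normalised, is the multiplier. The dimension enters only in showing that `(0, r)` is not in that
closure. Otherwise one gets points `z j ∈ C` on a line `c ⬝ x = s` below the primal value whose
constraint violations tend to `0`. A bounded subsequence has a feasible limit. An unbounded one
escapes along a direction `d` with `c ⬝ d = 0` and `A d ≥ 0`. In the plane `c` and `d` span
everything, so each row of `A` is `a₁ • c + a₂ • d` with `a₂ ≥ 0` and its constraint eventually
holds exactly. Either way a feasible point of value `s` exists, a contradiction.
-/

open Matrix Filter Topology

variable {ι κ : Type*} [Fintype κ]

def lagrangian [Fintype ι] (A : Matrix ι κ ℝ) (b : ι → ℝ) (c : κ → ℝ) (lam : ι → ℝ)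
    (x : κ → ℝ) : ℝ :=
  c ⬝ᵥ x + lam ⬝ᵥ (b - A *ᵥ x)

theorem lagrangian_eq [Fintype ι] (A : Matrix ι κ ℝ) (b : ι → ℝ) (c : κ → ℝ) (lam : ι → ℝ)
    (x : κ → ℝ) :
    lagrangian A b c lam x = (c - lam ᵥ* A) ⬝ᵥ x + lam ⬝ᵥ b := by
  rw [lagrangian, dotProduct_sub, dotProduct_mulVec, sub_dotProduct]
  ring

theorem lagrangian_le_of_feasible [Fintype ι] {A : Matrix ι κ ℝ} {b : ι → ℝ} (c : κ → ℝ)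
    {lam : ι → ℝ} (hlam : 0 ≤ lam) {x : κ → ℝ} (hx : b ≤ A *ᵥ x) :
    lagrangian A b c lam x ≤ c ⬝ᵥ x := by
  have := dotProduct_nonneg_of_nonneg hlam (sub_nonneg.2 hx)
  rw [lagrangian, ← neg_sub, dotProduct_neg]
  linarith

theorem le_dotProduct_of_mem_closure_convexHull {g : κ → ℝ} {r : ℝ} {X : Set (κ → ℝ)}
    (h : ∀ y ∈ X, r ≤ g ⬝ᵥ y) {x : κ → ℝ} (hx : x ∈ closure (convexHull ℝ X)) :
    r ≤ g ⬝ᵥ x :=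
  closure_minimal (convexHull_min h <|
      convex_halfSpace_ge ⟨dotProduct_add g, fun a y => dotProduct_smul a g y⟩ r)
    (isClosed_le continuous_const (continuous_const.dotProduct continuous_id)) hx

theorem le_lagrangian_of_mem_closure_convexHull [Fintype ι] {A : Matrix ι κ ℝ} {b : ι → ℝ}
    {c : κ → ℝ} {lam : ι → ℝ} {r : ℝ} {X : Set (κ → ℝ)} (h : ∀ y ∈ X, r ≤ lagrangian A b c lam y)
    {x : κ → ℝ} (hx : x ∈ closure (convexHull ℝ X)) : r ≤ lagrangian A b c lam x := by
  simp only [lagrangian_eq, ← sub_le_iff_le_add] at h ⊢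
  exact le_dotProduct_of_mem_closure_convexHull h hx

theorem nonpos_of_forall_nonneg_add_mul_lt {a μ u : ℝ} (h : ∀ s : ℝ, 0 ≤ s → a + s * μ < u) :
    μ ≤ 0 := by
  by_contra! hμ
  have hau : a < u := by simpa using h 0 le_rfl
  have := h ((u - a) / μ) (div_nonneg (sub_nonneg.2 hau.le) hμ.le)
  rw [div_mul_cancel₀ _ hμ.ne'] at this
  linarith

theorem exists_nonneg_forall_le_add_dotProduct [Fintype ι] {K : Set ((ι → ℝ) × ℝ)}
    (hK : Convex ℝ K) (hKup : IsUpperSet K) {t : ℝ} (ht : ((0 : ι → ℝ), t) ∈ K) {r : ℝ}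
    (hr : ((0 : ι → ℝ), r) ∉ closure K) :
    ∃ lam : ι → ℝ, 0 ≤ lam ∧ ∀ p ∈ K, r ≤ p.2 + lam ⬝ᵥ p.1 := by
  classical
  obtain ⟨f, u, hfu, huf⟩ := geometric_hahn_banach_closed_point hK.closure isClosed_closure hr
  have hfK : ∀ p ∈ K, f p < u := fun p hp => hfu p (subset_closure hp)
  -- `K` is invariant under adding nonnegative vectors, so `f` must be nonpositive on them
  have hf_nonpos : ∀ q, 0 ≤ q → f q ≤ 0 := fun q hq =>
    nonpos_of_forall_nonneg_add_mul_lt fun s hs => by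
      simpa using hfK _ (hKup (le_add_of_nonneg_right (smul_nonneg hs hq)) ht)
  set φ : ι → ℝ := fun i => f ((fun j => if i = j then 1 else 0), 0)
  set μ := f (0, 1)
  have hf : ∀ p : (ι → ℝ) × ℝ, f p = φ ⬝ᵥ p.1 + μ * p.2 := by
    intro p
    have hp : p = ContinuousLinearMap.inl ℝ _ ℝ p.1 + p.2 • ((0 : ι → ℝ), (1 : ℝ)) := by
      ext <;> simp
    rw [hp, map_add, map_smul, ← ContinuousLinearMap.comp_apply,
      ← ContinuousLinearMap.coe_coe, LinearMap.pi_apply_eq_sum_univ]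
    simp [φ, μ, dotProduct, mul_comm]
  have hμ : μ < 0 := by
    refine (hf_nonpos _ (by simp [Prod.le_def])).lt_of_ne fun hμ0 => ?_
    have h1 := hfK _ ht
    rw [hf] at huf h1
    simp only [dotProduct_zero, zero_add, show μ = 0 from hμ0, zero_mul] at huf h1
    linarith
  refine ⟨μ⁻¹ • φ, fun i => ?_, fun p hp => ?_⟩
  · have := hf_nonpos ((fun j => if i = j then 1 else 0), 0)
      (by simp [Prod.le_def, Pi.le_def]; intro j; split_ifs <;> norm_num)
    simpa using mul_nonneg_of_nonpos_of_nonpos (inv_nonpos.2 hμ.le) this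
  · have h1 := (hfK p hp).trans huf
    rw [hf, hf] at h1
    simp only [dotProduct_zero, zero_add] at h1
    rw [smul_dotProduct, smul_eq_mul, ← sub_le_iff_le_add', inv_mul_eq_div, le_div_iff_of_neg hμ]
    linarith

def perturbationSet (C : Set (κ → ℝ)) (A : Matrix ι κ ℝ) (b : ι → ℝ) (c : κ → ℝ) :
    Set ((ι → ℝ) × ℝ) :=
  {p | ∃ x ∈ C, b - A *ᵥ x ≤ p.1 ∧ c ⬝ᵥ x ≤ p.2}

theorem convex_perturbationSet {C : Set (κ → ℝ)} (hC : Convex ℝ C) (A : Matrix ι κ ℝ)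
    (b : ι → ℝ) (c : κ → ℝ) : Convex ℝ (perturbationSet C A b c) := by
  rintro p ⟨x, hx, hxb, hxc⟩ q ⟨y, hy, hyb, hyc⟩ t t' ht ht' htt
  refine ⟨t • x + t' • y, hC hx hy ht ht' htt, ?_, ?_⟩
  · calc b - A *ᵥ (t • x + t' • y) = t • (b - A *ᵥ x) + t' • (b - A *ᵥ y) := by
          conv_lhs => rw [← one_smul ℝ b, ← htt, add_smul]
          rw [mulVec_add, mulVec_smul, mulVec_smul, smul_sub, smul_sub]
          abel
      _ ≤ t • p.1 + t' • q.1 := add_le_add (smul_le_smul_of_nonneg_left hxb ht)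
          (smul_le_smul_of_nonneg_left hyb ht')
  · calc c ⬝ᵥ (t • x + t' • y) = t • (c ⬝ᵥ x) + t' • (c ⬝ᵥ y) := by
          rw [dotProduct_add, dotProduct_smul, dotProduct_smul]
      _ ≤ t • p.2 + t' • q.2 := add_le_add (smul_le_smul_of_nonneg_left hxc ht)
          (smul_le_smul_of_nonneg_left hyc ht')

theorem isUpperSet_perturbationSet (C : Set (κ → ℝ)) (A : Matrix ι κ ℝ) (b : ι → ℝ)
    (c : κ → ℝ) : IsUpperSet (perturbationSet C A b c) :=
  fun _ _ hpq ⟨x, hx, hxb, hxc⟩ => ⟨x, hx, hxb.trans hpq.1, hxc.trans hpq.2⟩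

theorem mk_zero_mem_perturbationSet {C : Set (κ → ℝ)} {A : Matrix ι κ ℝ} {b : ι → ℝ}
    (c : κ → ℝ) {y : κ → ℝ} (hy : y ∈ C) (hfy : b ≤ A *ᵥ y) :
    ((0 : ι → ℝ), c ⬝ᵥ y) ∈ perturbationSet C A b c :=
  ⟨y, hy, sub_nonpos.2 hfy, le_rfl⟩

theorem mem_and_feasible_of_tendsto {α : Type*} {l : Filter α} [l.NeBot] {C : Set (κ → ℝ)}
    (hC : IsClosed C) {A : Matrix ι κ ℝ} {b : ι → ℝ} {c : κ → ℝ} {s : ℝ} {z : α → κ → ℝ}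
    {v : α → ι → ℝ} {x : κ → ℝ} (hz : Tendsto z l (𝓝 x)) (hv : Tendsto v l (𝓝 0))
    (h : ∀ᶠ j in l, z j ∈ C ∧ c ⬝ᵥ z j = s ∧ b - v j ≤ A *ᵥ z j) :
    x ∈ C ∧ c ⬝ᵥ x = s ∧ b ≤ A *ᵥ x := by
  have hS : IsClosed {q : (κ → ℝ) × (ι → ℝ) | q.1 ∈ C ∧ c ⬝ᵥ q.1 = s ∧ b - q.2 ≤ A *ᵥ q.1} :=
    (hC.preimage continuous_fst).inter <|
      (isClosed_eq (continuous_const.dotProduct continuous_fst) continuous_const).inter <|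
        isClosed_le (continuous_const.sub continuous_snd)
          (continuous_const.matrix_mulVec continuous_fst)
  simpa using hS.mem_of_tendsto (hz.prodMk_nhds hv) h

theorem exists_subseq_tendsto_inv_norm_smul {E : Type*} [NormedAddCommGroup E] [NormedSpace ℝ E]
    [ProperSpace E] {z : ℕ → E} (hz : Tendsto (‖z ·‖) atTop atTop) :
    ∃ d : E, ‖d‖ = 1 ∧ ∃ φ : ℕ → ℕ, StrictMono φ ∧
      Tendsto (fun j => ‖z (φ j)‖⁻¹ • z (φ j)) atTop (𝓝 d) := by
  have hunit : ∀ᶠ j in atTop, ‖‖z j‖⁻¹ • z j‖ = 1 := by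
    filter_upwards [hz.eventually_gt_atTop 0] with j hj
    rw [norm_smul, norm_inv, norm_norm, inv_mul_cancel₀ hj.ne']
  obtain ⟨d, hd, φ, hφ, hlim⟩ := tendsto_subseq_of_frequently_bounded
    (Metric.isBounded_sphere (x := (0 : E)) (r := 1)) (x := fun j => ‖z j‖⁻¹ • z j)
    (hunit.mono fun j hj => by simpa using hj).frequently
  exact ⟨d, by simpa using Metric.isClosed_sphere.closure_subset hd, φ, hφ, hlim⟩

section Recession

variable {α : Type*} {l : Filter α} {z : α → κ → ℝ} {d : κ → ℝ}

theorem dotProduct_nonneg_of_tendsto_inv_norm_smul [l.NeBot] (hz : Tendsto (‖z ·‖) l atTop)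
    (hd : Tendsto (fun j => ‖z j‖⁻¹ • z j) l (𝓝 d)) {g : κ → ℝ} {r : α → ℝ} {r₀ : ℝ}
    (hr : Tendsto r l (𝓝 r₀)) (h : ∀ j, r j ≤ g ⬝ᵥ z j) : 0 ≤ g ⬝ᵥ d := by
  refine le_of_tendsto_of_tendsto (hr.div_atTop hz)
    ((continuous_const.dotProduct continuous_id).continuousAt.tendsto.comp hd)
    (Eventually.of_forall fun j => ?_)
  simpa [dotProduct_smul, div_eq_inv_mul] using
    mul_le_mul_of_nonneg_left (h j) (inv_nonneg.2 (norm_nonneg (z j)))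

theorem tendsto_dotProduct_atTop_of_tendsto_inv_norm_smul (hz : Tendsto (‖z ·‖) l atTop)
    (hd : Tendsto (fun j => ‖z j‖⁻¹ • z j) l (𝓝 d)) {g : κ → ℝ} (hg : 0 < g ⬝ᵥ d) :
    Tendsto (fun j => g ⬝ᵥ z j) l atTop := by
  refine (hz.atTop_mul_pos hg
    ((continuous_const.dotProduct continuous_id).continuousAt.tendsto.comp hd)).congr' ?_
  filter_upwards [hz.eventually_gt_atTop 0] with j hj
  simp [dotProduct_smul, hj.ne']

end Recession

theorem eventually_le_add_mul_of_tendsto {α : Type*} {l : Filter α} [l.NeBot] {a k m : ℝ}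
    (hm : 0 ≤ m) {t v : α → ℝ} (ht : Tendsto t l atTop) (hv : Tendsto v l (𝓝 0))
    (h : ∀ j, a - v j ≤ k + m * t j) : ∀ᶠ j in l, a ≤ k + m * t j := by
  rcases hm.eq_or_lt with rfl | hm
  · have : a - 0 ≤ k := le_of_tendsto (tendsto_const_nhds.sub hv)
      (Eventually.of_forall fun j => by simpa using h j)
    exact Eventually.of_forall fun j => by simpa using this
  · exact (tendsto_atTop_add_const_left _ k (ht.const_mul_atTop hm)).eventually_ge_atTop a

theorem span_pair_eq_top_of_dotProduct_eq_zero {n : ℕ} (hn : n ≤ 2) {c d : Fin n → ℝ}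
    (hc : c ≠ 0) (hd : d ≠ 0) (hcd : c ⬝ᵥ d = 0) : Submodule.span ℝ {c, d} = ⊤ := by
  have hli : LinearIndependent ℝ ![c, d] := LinearIndependent.pair_iff.2 fun s t hst => by
    have h1 := congrArg (c ⬝ᵥ ·) hst
    have h2 := congrArg (d ⬝ᵥ ·) hst
    simp only [dotProduct_add, dotProduct_smul, dotProduct_comm d c, hcd, dotProduct_zero,
      smul_eq_mul, mul_zero, add_zero, zero_add, mul_eq_zero, dotProduct_self_eq_zero, hc, hd,
      or_false] at h1 h2
    exact ⟨h1, h2⟩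
  have := hli.fintype_card_le_finrank
  rw [← Matrix.range_cons_cons_empty c d ![]]
  exact hli.span_eq_top_of_card_eq_finrank' (by simp at this ⊢; omega)

theorem exists_feasible_of_tendsto_violation [Fintype ι] {n : ℕ} (hn : n ≤ 2)
    {C : Set (Fin n → ℝ)} (hC : IsClosed C) {A : Matrix ι (Fin n) ℝ} {b : ι → ℝ}
    {c : Fin n → ℝ} (hc : c ≠ 0) {s : ℝ}
    {z : ℕ → Fin n → ℝ} {v : ℕ → ι → ℝ} (hzC : ∀ j, z j ∈ C) (hzc : ∀ j, c ⬝ᵥ z j = s)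
    (hzv : ∀ j, b - v j ≤ A *ᵥ z j) (hv : Tendsto v atTop (𝓝 0)) :
    ∃ x ∈ C, c ⬝ᵥ x = s ∧ b ≤ A *ᵥ x := by
  by_cases hbdd : ∃ M, ∃ᶠ j in atTop, z j ∈ Metric.closedBall (0 : Fin n → ℝ) M
  · obtain ⟨M, hM⟩ := hbdd
    obtain ⟨x, -, φ, hφ, hlim⟩ :=
      tendsto_subseq_of_frequently_bounded Metric.isBounded_closedBall hM
    exact ⟨x, mem_and_feasible_of_tendsto hC hlim (hv.comp hφ.tendsto_atTop)
      (Eventually.of_forall fun j => ⟨hzC _, hzc _, hzv _⟩)⟩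
  simp only [not_exists, not_frequently, Metric.mem_closedBall, dist_zero_right, not_le] at hbdd
  obtain ⟨d, hd1, φ, hφ, hd⟩ :=
    exists_subseq_tendsto_inv_norm_smul
      (tendsto_atTop.2 fun M => (hbdd M).mono fun j hj => hj.le)
  have hz : Tendsto (fun j => ‖z (φ j)‖) atTop atTop :=
    tendsto_atTop.2 fun M => (hφ.tendsto_atTop.eventually (hbdd M)).mono fun j hj => hj.le
  have hd0 : d ≠ 0 := by rintro rfl; simp at hd1
  have hcd : c ⬝ᵥ d = 0 := by
    have h1 := dotProduct_nonneg_of_tendsto_inv_norm_smul hz hd tendsto_const_nhds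
      fun j => (hzc (φ j)).ge
    have h2 := dotProduct_nonneg_of_tendsto_inv_norm_smul hz hd (g := -c) (r := fun _ => -s)
      tendsto_const_nhds fun j => by rw [neg_dotProduct, hzc]
    rw [neg_dotProduct] at h2
    linarith
  have hvφ (i : ι) : Tendsto (fun j => v (φ j) i) atTop (𝓝 0) :=
    ((continuous_apply i).tendsto 0).comp (hv.comp hφ.tendsto_atTop)
  have hdd : 0 < d ⬝ᵥ d := by simpa using dotProduct_star_self_pos_iff.2 hd0
  have hdz := tendsto_dotProduct_atTop_of_tendsto_inv_norm_smul hz hd hdd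
  have hspan := span_pair_eq_top_of_dotProduct_eq_zero hn hc hd0 hcd
  have hrow (i : ι) : ∀ᶠ j in atTop, b i ≤ (A *ᵥ z (φ j)) i := by
    obtain ⟨a₁, a₂, hAi⟩ := Submodule.mem_span_pair.1 (hspan ▸ Submodule.mem_top (x := A i))
    have hval (x : Fin n → ℝ) : (A *ᵥ x) i = a₁ * (c ⬝ᵥ x) + a₂ * (d ⬝ᵥ x) := by
      change A i ⬝ᵥ x = _
      rw [← hAi, add_dotProduct, smul_dotProduct, smul_dotProduct, smul_eq_mul, smul_eq_mul]
    have ha₂ : 0 ≤ a₂ := by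
      have := dotProduct_nonneg_of_tendsto_inv_norm_smul hz hd (tendsto_const_nhds.sub (hvφ i))
        fun j => hzv (φ j) i
      rw [← hAi, add_dotProduct, smul_dotProduct, smul_dotProduct, hcd, smul_zero,
        zero_add, smul_eq_mul] at this
      exact (mul_nonneg_iff_of_pos_right hdd).1 this
    simp only [hval, hzc]
    exact eventually_le_add_mul_of_tendsto ha₂ hdz (hvφ i) fun j => by
      simpa [hval, hzc] using hzv (φ j) i
  obtain ⟨j, hj⟩ := (eventually_all.2 hrow).exists
  exact ⟨z (φ j), hzC _, hzc _, hj⟩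

theorem mk_zero_notMem_closure_perturbationSet [Fintype ι] {n : ℕ} (hn : n ≤ 2)
    {C : Set (Fin n → ℝ)} (hCc : Convex ℝ C) (hC : IsClosed C) {A : Matrix ι (Fin n) ℝ}
    {b : ι → ℝ} {c : Fin n → ℝ} {y : Fin n → ℝ} (hy : y ∈ C) (hfy : b ≤ A *ᵥ y) {ρ r : ℝ}
    (hlb : ∀ x ∈ C, b ≤ A *ᵥ x → ρ ≤ c ⬝ᵥ x) (hr : r < ρ) :
    ((0 : ι → ℝ), r) ∉ closure (perturbationSet C A b c) := by
  rcases eq_or_ne c 0 with rfl | hc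
  · have hρ : ρ ≤ 0 := by simpa using hlb y hy hfy
    have : closure (perturbationSet C A b 0) ⊆ {p | 0 ≤ p.2} :=
      closure_minimal (fun p ⟨x, _, _, hx⟩ => by simpa using hx)
        (isClosed_le continuous_const continuous_snd)
    exact fun h => by linarith [show 0 ≤ r from this h]
  intro hmem
  obtain ⟨p, hpK, hp⟩ := mem_closure_iff_seq_limit.1 hmem
  choose x hxC hxb hxc using hpK
  obtain ⟨s, hrs, hsρ⟩ := exists_between hr
  obtain ⟨J, hJ⟩ := eventually_atTop.1
    (((continuous_snd.tendsto _).comp hp).eventually_lt_const hrs)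
  set v : ℕ → ι → ℝ := fun j => (p (j + J)).1 ⊔ 0
  have hv : Tendsto v atTop (𝓝 0) := tendsto_pi_nhds.2 fun i => by
    simpa [v] using (((continuous_apply i).comp continuous_fst).tendsto _ |>.comp
      (hp.comp (tendsto_add_atTop_nat J))).sup_nhds (tendsto_const_nhds (x := (0 : ℝ)))
  -- slide each `x` towards `y` until the objective equals `s`; the relaxed constraints persist
  have hz (j : ℕ) : ∃ z ∈ C, c ⬝ᵥ z = s ∧ b - v j ≤ A *ᵥ z := by
    have hs : s ∈ Set.Icc (c ⬝ᵥ x (j + J)) (c ⬝ᵥ y) :=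
      ⟨(hxc _).trans (hJ _ (by omega)).le, by linarith [hlb y hy hfy]⟩
    obtain ⟨z, hz, hzs⟩ := (convex_segment _ _).isPreconnected.intermediate_value
      (left_mem_segment ℝ _ _) (right_mem_segment ℝ _ _)
      (continuous_const.dotProduct continuous_id).continuousOn hs
    have hconv : Convex ℝ {z | b - v j ≤ A *ᵥ z} :=
      convex_halfSpace_ge A.mulVecLin.isLinear (b - v j)
    exact ⟨z, hCc.segment_subset (hxC _) hy hz, hzs, hconv.segment_subset
      (sub_le_comm.2 ((hxb _).trans le_sup_left)) ((sub_le_self _ le_sup_right).trans hfy) hz⟩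
  choose z hzC hzc hzv using hz
  obtain ⟨x, hx, hxs, hfx⟩ := exists_feasible_of_tendsto_violation hn hC hc hzC hzc hzv hv
  linarith [hlb x hx hfx]

theorem exists_nonneg_forall_le_lagrangian [Fintype ι] {n : ℕ} (hn : n ≤ 2)
    {C : Set (Fin n → ℝ)} (hCc : Convex ℝ C) (hC : IsClosed C) {A : Matrix ι (Fin n) ℝ}
    {b : ι → ℝ} {c : Fin n → ℝ} {y : Fin n → ℝ} (hy : y ∈ C) (hfy : b ≤ A *ᵥ y) {ρ r : ℝ}
    (hlb : ∀ x ∈ C, b ≤ A *ᵥ x → ρ ≤ c ⬝ᵥ x) (hr : r < ρ) :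
    ∃ lam : ι → ℝ, 0 ≤ lam ∧ ∀ x ∈ C, r ≤ lagrangian A b c lam x := by
  obtain ⟨lam, hlam, h⟩ := exists_nonneg_forall_le_add_dotProduct
    (convex_perturbationSet hCc A b c) (isUpperSet_perturbationSet C A b c)
    (mk_zero_mem_perturbationSet c hy hfy)
    (mk_zero_notMem_closure_perturbationSet hn hCc hC hy hfy hlb hr)
  exact ⟨lam, hlam, fun x hx => h (b - A *ᵥ x, c ⬝ᵥ x) ⟨x, hx, le_rfl, le_rfl⟩⟩

theorem geoffrion_dim_le_two_general {m n : ℕ} (hn : n ≤ 2)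
    (A : Matrix (Fin m) (Fin n) ℝ) (b : Fin m → ℝ) (c : Fin n → ℝ)
    (X : Set (Fin n → ℝ))
    (hfeas : ∃ x ∈ X, b ≤ A.mulVec x) :
    sSup ((fun lam =>
        sInf ((fun x => ((c ⬝ᵥ x + lam ⬝ᵥ (b - A.mulVec x) : ℝ) : EReal)) '' X)) ''
          {lam : Fin m → ℝ | 0 ≤ lam}) =
      sInf ((fun x => ((c ⬝ᵥ x : ℝ) : EReal)) ''
        {x ∈ closure (convexHull ℝ X) | b ≤ A.mulVec x}) := by
  obtain ⟨y, hyX, hfy⟩ := hfeas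
  have hXC : X ⊆ closure (convexHull ℝ X) := (subset_convexHull ℝ X).trans subset_closure
  apply le_antisymm
  · refine sSup_le ?_
    rintro _ ⟨lam, hlam, rfl⟩
    refine le_sInf ?_
    rintro _ ⟨x, ⟨hx, hfx⟩, rfl⟩
    refine EReal.ge_of_forall_gt_iff_ge.1 fun r hr => EReal.coe_le_coe_iff.2 ?_
    have hrX : ∀ y ∈ X, r ≤ lagrangian A b c lam y := fun y hy =>
      EReal.coe_le_coe_iff.1 (hr.trans_le (sInf_le ⟨y, hy, rfl⟩)).le
    exact (le_lagrangian_of_mem_closure_convexHull hrX hx).trans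
      (lagrangian_le_of_feasible c hlam hfx)
  · refine EReal.ge_of_forall_gt_iff_ge.1 fun r hr => ?_
    obtain ⟨ρ, hrρ, hρ⟩ := EReal.lt_iff_exists_real_btwn.1 hr
    have hlb : ∀ x ∈ closure (convexHull ℝ X), b ≤ A *ᵥ x → ρ ≤ c ⬝ᵥ x := fun x hx hfx =>
      EReal.coe_le_coe_iff.1 (hρ.trans_le (sInf_le ⟨x, ⟨hx, hfx⟩, rfl⟩)).le
    obtain ⟨lam, hlam, hlag⟩ := exists_nonneg_forall_le_lagrangian hn
      (convex_convexHull ℝ X).closure isClosed_closure (hXC hyX) hfy hlb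
      (EReal.coe_lt_coe_iff.1 hrρ)
    refine le_sSup_of_le ⟨lam, hlam, rfl⟩ (le_sInf ?_)
    rintro _ ⟨x, hx, rfl⟩
    exact EReal.coe_le_coe_iff.2 (hlag x (hXC hx))

theorem geoffrion_dim_le_two {m n : ℕ} (hn : n ≤ 2)
    (A : Matrix (Fin m) (Fin n) ℝ) (b : Fin m → ℝ) (c : Fin n → ℝ)
    (X : Set (Fin n → ℝ))
    (hX : X ⊆ {x : Fin n → ℝ | ∀ i, ∃ z : ℤ, x i = (z : ℝ)})
    (hfeas : ∃ x ∈ X, b ≤ A.mulVec x) :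
    sSup ((fun lam =>
        sInf ((fun x => ((c ⬝ᵥ x + lam ⬝ᵥ (b - A.mulVec x) : ℝ) : EReal)) '' X)) ''
          {lam : Fin m → ℝ | 0 ≤ lam}) =
      sInf ((fun x => ((c ⬝ᵥ x : ℝ) : EReal)) ''
        {x ∈ closure (convexHull ℝ X) | b ≤ A.mulVec x}) :=
  geoffrion_dim_le_two_general hn A b c X hfeas
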